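/- arXiv:2002.00673 — 7 statements merged into one kernel-verified Lean document; each statement's English description precedes it below -/
import Mathlib

section
/- If m is an even positive integer and k is a positive integer coprime to m, then gcd(2^k + 1, 2^m - 1) = 3. -/
lemma two_pow_eq_one_zmod {d n : ℕ} (h : d ∣ 2 ^ n - 1) : (2 : ZMod d) ^ n = 1 := by
  have h1 : (1 : ℕ) ≤ 2 ^ n := Nat.one_le_two_pow
  have := (ZMod.natCast_eq_zero_iff _ _).mpr h
  rw [Nat.cast_sub h1] at this
  push_cast at this
  linear_combination this

theorem gcd_two_pow_add_one_eq_three (k m : ℕ) (hk : 0 < k) (hm : 0 < m)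
    (hme : Even m) (hcop : Nat.gcd k m = 1) :
    Nat.gcd (2 ^ k + 1) (2 ^ m - 1) = 3 := by
  set d := Nat.gcd (2 ^ k + 1) (2 ^ m - 1) with hd
  have ha : d ∣ 2 ^ k + 1 := Nat.gcd_dvd_left _ _
  have hb : d ∣ 2 ^ m - 1 := Nat.gcd_dvd_right _ _
  have hkodd : Odd k := by
    rcases Nat.even_or_odd k with he | ho
    · exfalso
      obtain ⟨t, ht⟩ := he
      obtain ⟨s, hs⟩ := hme
      have : 2 ∣ Nat.gcd k m := Nat.dvd_gcd ⟨t, by omega⟩ ⟨s, by omega⟩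
      omega
    · exact ho
  -- in ZMod d, 2^k = -1
  have hZa : (2 : ZMod d) ^ k = -1 := by
    have := (ZMod.natCast_eq_zero_iff _ _).mpr ha
    push_cast at this
    linear_combination this
  have hZb : (2 : ZMod d) ^ m = 1 := two_pow_eq_one_zmod hb
  have hZ2k : (2 : ZMod d) ^ (2 * k) = 1 := by
    rw [mul_comm, pow_mul, hZa]; ring
  -- order of 2 divides gcd (2*k) m = 2
  have hgcd : Nat.gcd (2 * k) m = 2 := by
    obtain ⟨s, hs⟩ := hme
    have h2 : 2 ∣ m := ⟨s, by omega⟩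
    rw [mul_comm, Nat.Coprime.gcd_mul_left_cancel 2 hcop, Nat.gcd_eq_left h2]
  have hord : orderOf (2 : ZMod d) ∣ 2 :=
    hgcd ▸ Nat.dvd_gcd (orderOf_dvd_of_pow_eq_one hZ2k) (orderOf_dvd_of_pow_eq_one hZb)
  have hZ4 : (2 : ZMod d) ^ 2 = 1 := orderOf_dvd_iff_pow_eq_one.mp hord
  -- hence d ∣ 3
  have hd3 : d ∣ 3 := by
    have : ((3 : ℕ) : ZMod d) = 0 := by push_cast; linear_combination hZ4
    exact (ZMod.natCast_eq_zero_iff _ _).mp this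
  -- and 3 ∣ d
  have h3a : 3 ∣ 2 ^ k + 1 := by
    have := Odd.nat_add_dvd_pow_add_pow 2 1 hkodd
    simpa using this
  have h3b : 3 ∣ 2 ^ m - 1 := by
    obtain ⟨s, hs⟩ := hme
    have hm4 : 2 ^ m = 4 ^ s := by rw [show m = 2 * s by omega, pow_mul]; norm_num
    have := Nat.sub_dvd_pow_sub_pow 4 1 s
    simpa [hm4] using this
  have h3d : 3 ∣ d := Nat.dvd_gcd h3a h3b
  exact Nat.dvd_antisymm hd3 h3d
end

section
/- Let m be an even positive integer, k coprime to m, s an even integer with 0 < s \le m, and \alpha a non-cube in F_{2^m}^*. For any \delta in F_{2^m}, the F_2-linear map P on F_{2^m} defined by P(x) = x + \alpha \delta^{(2^k+1)2^s} x^{2^s} is bijective. -/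
/-! The map is additive in characteristic 2, so it suffices that its kernel is trivial.
If `x ≠ 0` lies in the kernel then `α δ^((2^k+1) 2^s) x^(2^s-1) = -1`. For odd `k` and even `s`
both `2^k + 1` and `2^s - 1` are divisible by 3, so this says that `-α⁻¹` is a cube, hence so is `α`. -/

lemma charP_two_of_card_eq_two_pow {F : Type*} [Field F] [Fintype F] {m : ℕ}
    (hcard : Fintype.card F = 2 ^ m) : CharP F 2 := by
  have h : (2 : F) ^ m = 0 := by exact_mod_cast hcard ▸ FiniteField.cast_card_eq_zero F
  exact (CharP.charP_iff_prime_eq_zero Nat.prime_two).2 (eq_zero_of_pow_eq_zero h)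

lemma injective_add_mul_pow_expChar_pow_iff {R : Type*} [CommRing R] (p : ℕ) [ExpChar R p]
    (c : R) (n : ℕ) :
    Function.Injective (fun x : R => x + c * x ^ p ^ n) ↔
      ∀ x : R, x + c * x ^ p ^ n = 0 → x = 0 :=
  injective_iff_map_eq_zero
    (AddMonoidHom.id R + (AddMonoidHom.mulLeft c).comp (iterateFrobenius R p n).toAddMonoidHom)

lemma eq_zero_of_add_mul_cube_mul_pow_eq_zero {F : Type*} [Field F] {α : F}
    (hα : ∀ w : F, α ≠ w ^ 3) (γ : F) (t : ℕ) {x : F}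
    (hx : x + α * γ ^ 3 * x ^ (3 * t + 1) = 0) : x = 0 := by
  by_contra hx0
  have hw : α * (γ * x ^ t) ^ 3 = -1 :=
    mul_right_cancel₀ hx0 (by linear_combination hx)
  have hα' : -α = ((γ * x ^ t) ^ 3)⁻¹ := eq_inv_of_mul_eq_one_left (by linear_combination -hw)
  exact hα (-(γ * x ^ t)⁻¹) (by rw [neg_pow, inv_pow, ← hα']; ring)

lemma three_dvd_two_pow_add_one {k : ℕ} (hk : Odd k) : 3 ∣ 2 ^ k + 1 := by
  simpa using hk.nat_add_dvd_pow_add_pow 2 1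

lemma two_pow_mod_three_of_even {s : ℕ} (hs : Even s) : 2 ^ s % 3 = 1 := by
  obtain ⟨r, rfl⟩ := hs
  rw [← two_mul, pow_mul, Nat.pow_mod]
  norm_num

theorem linear_map_P_bijective_general (F : Type*) [Field F] [Fintype F] (m k s : ℕ)
    (hme : Even m) (hcop : Nat.gcd k m = 1)
    (hse : Even s)
    (hcard : Fintype.card F = 2 ^ m)
    (α : F) (hαnc : ∀ w : F, α ≠ w ^ 3) (δ : F) :
    Function.Bijective (fun x : F => x + α * δ ^ ((2 ^ k + 1) * 2 ^ s) * x ^ (2 ^ s)) := by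
  have := charP_two_of_card_eq_two_pow hcard
  have hk : Odd k := (Nat.Coprime.coprime_dvd_right hme.two_dvd hcop).odd_of_right
  obtain ⟨u, hu⟩ := three_dvd_two_pow_add_one hk
  have ht : 2 ^ s = 3 * (2 ^ s / 3) + 1 := by
    have := Nat.div_add_mod (2 ^ s) 3
    rw [two_pow_mod_three_of_even hse] at this
    omega
  have hinj : Function.Injective
      (fun x : F => x + α * δ ^ ((2 ^ k + 1) * 2 ^ s) * x ^ (2 ^ s)) := by
    refine (injective_add_mul_pow_expChar_pow_iff 2 _ s).2 fun x hx => ?_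
    refine eq_zero_of_add_mul_cube_mul_pow_eq_zero hαnc (δ ^ (u * 2 ^ s)) (2 ^ s / 3) ?_
    rw [← ht, ← hx, hu]
    ring
  exact ⟨hinj, Finite.surjective_of_injective hinj⟩

theorem linear_map_P_bijective (F : Type*) [Field F] [Fintype F] (m k s : ℕ)
    (hm0 : 0 < m) (hme : Even m) (hk : 0 < k) (hcop : Nat.gcd k m = 1)
    (hse : Even s) (hs0 : 0 < s) (hsm : s ≤ m)
    (hcard : Fintype.card F = 2 ^ m)
    (α : F) (hα0 : α ≠ 0) (hαnc : ∀ w : F, α ≠ w ^ 3) (δ : F) :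
    Function.Bijective (fun x : F => x + α * δ ^ ((2 ^ k + 1) * 2 ^ s) * x ^ (2 ^ s)) :=
  linear_map_P_bijective_general F m k s hme hcop hse hcard α hαnc δ
end

section
/- Let n \ge 2 and let f(x) = x^{2^k+1} on F_{2^n} with gcd(k,n) = 1. Then f is almost perfect nonlinear: for every nonzero a in F_{2^n} and every b in F_{2^n}, the equation f(x+a) + f(x) = b has exactly 0 or 2 solutions x in F_{2^n}. -/
private lemma pow_pow_mul' {M : Type*} [Monoid M] (x : M) (k m : ℕ) (h : x ^ (2^k) = x) :
    x ^ (2^(m*k)) = x := by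
  induction m with
  | zero => simp
  | succ m ih => rw [Nat.succ_mul, pow_add, pow_mul, ih, h]

private lemma pow_pow_gcd' {M : Type*} [Monoid M] : ∀ k : ℕ, ∀ n : ℕ, ∀ x : M,
    x ^ (2^k) = x → x ^ (2^n) = x → x ^ (2^(Nat.gcd k n)) = x := by
  intro k
  induction k using Nat.strong_induction_on with
  | _ k ih =>
    intro n x hkx hnx
    rcases Nat.eq_zero_or_pos k with h0 | hpos
    · subst h0; simpa using hnx
    · rw [Nat.gcd_rec]
      refine ih (n % k) (Nat.mod_lt _ hpos) k x ?_ hkx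
      have hm := pow_pow_mul' x k (n / k) hkx
      calc x ^ 2^(n % k) = (x ^ 2^((n/k)*k)) ^ 2^(n % k) := by rw [hm]
        _ = x ^ (2^((n/k)*k) * 2^(n%k)) := (pow_mul ..).symm
        _ = x ^ 2^((n/k)*k + n%k) := by rw [pow_add]
        _ = x := by rw [Nat.div_add_mod'] ; exact hnx

theorem gold_is_APN (F : Type*) [Field F] [Fintype F] [CharP F 2] (n k : ℕ)
    (hn : 2 ≤ n) (hk : 0 < k) (hcop : Nat.gcd k n = 1)
    (hcard : Fintype.card F = 2 ^ n) :
    ∀ a : F, a ≠ 0 → ∀ b : F,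
      Nat.card {x : F // (x + a) ^ (2 ^ k + 1) + x ^ (2 ^ k + 1) = b} = 0 ∨
      Nat.card {x : F // (x + a) ^ (2 ^ k + 1) + x ^ (2 ^ k + 1) = b} = 2 := by
  haveI : Fact (Nat.Prime 2) := ⟨Nat.prime_two⟩
  intro a ha b
  set q : ℕ := 2 ^ k with hq
  have hq0 : q ≠ 0 := by positivity
  have hexp : ∀ x : F, (x + a) ^ (q + 1) + x ^ (q + 1)
      = a * x ^ q + a ^ q * x + a ^ (q + 1) := by
    intro x
    have hfrob : (x + a) ^ q = x ^ q + a ^ q := add_pow_char_pow x a 2 k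
    calc (x + a) ^ (q + 1) + x ^ (q + 1)
        = (x ^ q + a ^ q) * (x + a) + x ^ q * x := by
          rw [pow_succ, pow_succ, hfrob]
      _ = (x ^ q * x + x ^ q * x) + (a * x ^ q + a ^ q * x + a ^ q * a) := by ring
      _ = a * x ^ q + a ^ q * x + a ^ (q + 1) := by
          rw [CharTwo.add_self_eq_zero, pow_succ]; ring
  have heq : ∀ x : F, ((x + a) ^ (q + 1) + x ^ (q + 1) = b)
      ↔ a * x ^ q + a ^ q * x = b + a ^ (q + 1) := by
    intro x
    rw [hexp x]
    constructor
    · intro h; rw [← h, add_assoc, CharTwo.add_self_eq_zero, add_zero]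
    · intro h; rw [h, add_assoc, CharTwo.add_self_eq_zero, add_zero]
  -- kernel description
  have hker : ∀ y : F, (a * y ^ q + a ^ q * y = 0) ↔ (y = 0 ∨ y = a) := by
    intro y
    constructor
    · intro h
      have h1 : a * y ^ q = a ^ q * y := by
        rw [CharTwo.add_eq_iff_eq_add] at h; simpa using h
      have hz : (y * a⁻¹) ^ q = y * a⁻¹ := by
        rw [mul_pow, inv_pow, ← div_eq_mul_inv, ← div_eq_mul_inv,
          div_eq_div_iff (pow_ne_zero q ha) ha]
        linear_combination h1
      have hzn : (y * a⁻¹) ^ (2 ^ n) = y * a⁻¹ := by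
        rw [← hcard]; exact FiniteField.pow_card _
      have h1' : (y * a⁻¹) ^ (2 ^ 1) = y * a⁻¹ := by
        have := pow_pow_gcd' k n (y * a⁻¹) hz hzn
        rwa [hcop] at this
      have hsq : (y * a⁻¹) * ((y * a⁻¹) - 1) = 0 := by
        have h2 : (y * a⁻¹) ^ 2 = y * a⁻¹ := by simpa using h1'
        linear_combination h2
      rcases mul_eq_zero.mp hsq with h0 | h0
      · rcases mul_eq_zero.mp h0 with h0 | h0
        · exact Or.inl h0
        · exact absurd h0 (inv_ne_zero ha)
      · right
        have h3 : y * a⁻¹ = 1 := by linear_combination h0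
        calc y = y * a⁻¹ * a := by field_simp
          _ = a := by rw [h3, one_mul]
    · intro hy
      rcases hy with h0 | h0 <;> rw [h0]
      · simp [zero_pow hq0]
      · rw [mul_comm a (a ^ q), CharTwo.add_self_eq_zero]
  by_cases hex : ∃ x : F, (x + a) ^ (q + 1) + x ^ (q + 1) = b
  · right
    obtain ⟨x₀, hx₀⟩ := hex
    have hx₀' : a * x₀ ^ q + a ^ q * x₀ = b + a ^ (q + 1) := (heq x₀).mp hx₀
    have hL : ∀ x y : F, a * (x + y) ^ q + a ^ q * (x + y)
        = (a * x ^ q + a ^ q * x) + (a * y ^ q + a ^ q * y) := by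
      intro x y
      rw [add_pow_char_pow x y 2 k]; ring
    have e : {x : F // (x + a) ^ (q + 1) + x ^ (q + 1) = b}
        ≃ {y : F // y = 0 ∨ y = a} := by
      refine ⟨fun x => ⟨x.1 + x₀, ?_⟩, fun y => ⟨y.1 + x₀, ?_⟩, ?_, ?_⟩
      · rw [← hker, hL, (heq x.1).mp x.2, hx₀', CharTwo.add_self_eq_zero]
      · rw [heq, hL, hx₀']
        rw [(hker y.1).mpr y.2, zero_add]
      · intro x; ext
        simp [add_assoc, CharTwo.add_self_eq_zero]
      · intro y; ext
        simp [add_assoc, CharTwo.add_self_eq_zero]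
    rw [Nat.card_congr e]
    calc Nat.card {y : F // y = 0 ∨ y = a}
        = Nat.card ({0, a} : Set F) := by
          apply Nat.card_congr
          exact Equiv.subtypeEquivRight (by intro y; simp [Set.mem_insert_iff])
      _ = 2 := by rw [Nat.card_coe_set_eq, Set.ncard_pair (Ne.symm ha)]
  · left
    rw [Nat.card_eq_zero]
    left
    rw [not_exists] at hex
    exact ⟨fun x => hex x.1 x.2⟩
end

section
/- Let m be even and let k, s be integers with gcd(k,m)=1, s even, and \alpha a non-cube in F_{2^m}^*. Then the function f on F_{2^m} \times F_{2^m} given by f(x,y) = (x^{2^k+1} + \alpha y^{(2^k+1)2^s}, xy) is almost perfect nonlinear: for every nonzero (a,b) and every (c,d) in F_{2^m}^2, the equation f((x,y)+(a,b)) + f(x,y) = (c,d) has exactly 0 or 2 solutions. -/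
private lemma pz_fix_mul {F : Type*} [Monoid F] (x : F) (a : ℕ) (h : x ^ 2 ^ a = x) :
    ∀ n : ℕ, x ^ 2 ^ (a * n) = x := by
  intro n
  induction n with
  | zero => simp
  | succ n ih => rw [Nat.mul_succ, pow_add, pow_mul, ih, h]

private lemma pz_fix_gcd {F : Type*} [Monoid F] (x : F) :
    ∀ a b : ℕ, x ^ 2 ^ a = x → x ^ 2 ^ b = x → x ^ 2 ^ Nat.gcd a b = x := by
  intro a b
  induction a, b using Nat.gcd.induction with
  | H0 n => intro _ h; simpa using h
  | H1 a b ha ih =>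
    intro h1 h2
    rw [Nat.gcd_rec]
    refine ih ?_ h1
    have hq := pz_fix_mul x a h1 (b / a)
    have hb : a * (b / a) + b % a = b := Nat.div_add_mod b a
    conv_rhs => rw [← h2, ← hb, pow_add, pow_mul, hq]

theorem pott_zhou_is_APN (F : Type*) [Field F] [Fintype F] (m k s : ℕ)
    (hm0 : 0 < m) (hme : Even m) (hk : 0 < k) (hcop : Nat.gcd k m = 1)
    (hse : Even s) (hcard : Fintype.card F = 2 ^ m)
    (α : F) (hα0 : α ≠ 0) (hαnc : ∀ w : F, α ≠ w ^ 3) :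
    ∀ a b : F, (a, b) ≠ (0, 0) → ∀ c d : F,
      Nat.card {p : F × F //
        ((p.1 + a) ^ (2 ^ k + 1) + α * (p.2 + b) ^ ((2 ^ k + 1) * 2 ^ s)
            + (p.1 ^ (2 ^ k + 1) + α * p.2 ^ ((2 ^ k + 1) * 2 ^ s)),
          (p.1 + a) * (p.2 + b) + p.1 * p.2) = (c, d)} = 0 ∨
      Nat.card {p : F × F //
        ((p.1 + a) ^ (2 ^ k + 1) + α * (p.2 + b) ^ ((2 ^ k + 1) * 2 ^ s)
            + (p.1 ^ (2 ^ k + 1) + α * p.2 ^ ((2 ^ k + 1) * 2 ^ s)),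
          (p.1 + a) * (p.2 + b) + p.1 * p.2) = (c, d)} = 2 := by
  -- characteristic 2
  obtain ⟨p, hch⟩ := CharP.exists F
  haveI := hch
  have hpprime : p.Prime := CharP.char_is_prime F p
  obtain ⟨n, -, hcard'⟩ := FiniteField.card F p
  have hp2 : p = 2 := by
    have hdvd : p ∣ 2 ^ m := by
      rw [← hcard, hcard']
      exact dvd_pow_self p n.2.ne'
    have h2 := hpprime.dvd_of_dvd_pow (n := m) (by simpa using hdvd)
    exact (Nat.prime_dvd_prime_iff_eq hpprime Nat.prime_two).mp h2
  subst hp2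
  haveI : Fact (Nat.Prime 2) := ⟨by norm_num⟩
  have htwo : (2 : F) = 0 := by
    have := CharP.cast_eq_zero F 2
    exact_mod_cast this
  have hfr : ∀ (n : ℕ) (u v : F), (u + v) ^ 2 ^ n = u ^ 2 ^ n + v ^ 2 ^ n :=
    fun n u v => add_pow_char_pow u v 2 n
  -- fixed points of x ↦ x^(2^k)
  have hfix : ∀ x : F, x ^ 2 ^ k = x → x = 0 ∨ x = 1 := by
    intro x hx
    have hxm : x ^ 2 ^ m = x := by rw [← hcard]; exact FiniteField.pow_card x
    have h1 := pz_fix_gcd x k m hx hxm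
    rw [hcop, pow_one] at h1
    have h0 : x * (x - 1) = 0 := by linear_combination h1
    rcases mul_eq_zero.mp h0 with h | h
    · exact Or.inl h
    · exact Or.inr (by linear_combination h)
  -- k is odd
  have hko : Odd k := by
    rcases Nat.even_or_odd k with he | ho
    · exfalso
      obtain ⟨m2, hm2⟩ := hme
      obtain ⟨k2, hk2⟩ := he
      have : 2 ∣ Nat.gcd k m := Nat.dvd_gcd ⟨k2, by omega⟩ ⟨m2, by omega⟩
      omega
    · exact ho
  -- divisibility facts
  have h4mod : ∀ j : ℕ, 3 ∣ 2 * 4 ^ j + 1 := by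
    intro j
    induction j with
    | zero => decide
    | succ n ih => rw [pow_succ]; omega
  have h3k : 3 ∣ 2 ^ k + 1 := by
    obtain ⟨j, hj⟩ := hko
    have h1 := h4mod j
    have h2 : (2 : ℕ) ^ k = 2 * 4 ^ j := by
      subst hj
      rw [pow_add, pow_mul]
      norm_num [mul_comm]
    omega
  have h3s : 3 ∣ 2 ^ s - 1 := by
    obtain ⟨j, hj⟩ := hse
    have h1 : ∀ i : ℕ, 3 ∣ 4 ^ i - 1 ∧ 0 < 4 ^ i := by
      intro i
      induction i with
      | zero => decide
      | succ n ih => rw [pow_succ]; omega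
    have h2 : (2 : ℕ) ^ s = 4 ^ j := by
      subst hj
      rw [← two_mul, pow_mul]
      norm_num
    have := h1 j
    omega
  obtain ⟨i3, hi3⟩ := h3k
  obtain ⟨j3, hj3⟩ := h3s
  have hs1 : (1 : ℕ) ≤ 2 ^ s := Nat.one_le_two_pow
  intro a b hab c d
  -- the two algebraic identities
  have hG : ∀ x y : F,
      (x + a) ^ (2 ^ k + 1) + α * (y + b) ^ ((2 ^ k + 1) * 2 ^ s)
          + (x ^ (2 ^ k + 1) + α * y ^ ((2 ^ k + 1) * 2 ^ s))
        = a * x ^ 2 ^ k + a ^ 2 ^ k * x + a ^ 2 ^ k * a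
          + α * (b * y ^ 2 ^ k + b ^ 2 ^ k * y + b ^ 2 ^ k * b) ^ 2 ^ s := by
    intro x y
    have h1 : (x + a) ^ (2 ^ k + 1) = (x ^ 2 ^ k + a ^ 2 ^ k) * (x + a) := by
      rw [pow_succ, hfr k x a]
    have h2y : (y + b) ^ ((2 ^ k + 1) * 2 ^ s) = ((y ^ 2 ^ k + b ^ 2 ^ k) * (y + b)) ^ 2 ^ s := by
      rw [pow_mul, pow_succ, hfr k y b]
    have h3y : y ^ ((2 ^ k + 1) * 2 ^ s) = (y ^ 2 ^ k * y) ^ 2 ^ s := by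
      rw [pow_mul, pow_succ]
    have h4 : ((y ^ 2 ^ k + b ^ 2 ^ k) * (y + b)) ^ 2 ^ s
        = (y ^ 2 ^ k * y) ^ 2 ^ s + (b * y ^ 2 ^ k + b ^ 2 ^ k * y + b ^ 2 ^ k * b) ^ 2 ^ s := by
      rw [← hfr s]
      congr 1
      ring
    rw [h1, h2y, h3y, h4, pow_succ x]
    linear_combination (x ^ 2 ^ k * x + α * (y ^ 2 ^ k * y) ^ 2 ^ s) * htwo
  have hL : ∀ x y : F, (x + a) * (y + b) + x * y = b * x + a * y + a * b := by
    intro x y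
    linear_combination (x * y) * htwo
  -- core uniqueness lemma
  have hcore : ∀ e f : F, b * e = a * f →
      a * e ^ 2 ^ k + a ^ 2 ^ k * e + α * (b * f ^ 2 ^ k + b ^ 2 ^ k * f) ^ 2 ^ s = 0 →
      (e = 0 ∧ f = 0) ∨ (e = a ∧ f = b) := by
    intro e f hbe heq
    by_cases ha : a = 0
    · -- then b ≠ 0, e = 0
      have hb : b ≠ 0 := by
        intro hb0
        exact hab (by rw [ha, hb0])
      have he0 : e = 0 := by
        rcases mul_eq_zero.mp (show b * e = 0 by rw [hbe, ha, zero_mul]) with h | h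
        · exact absurd h hb
        · exact h
      subst he0
      rw [ha] at heq
      have h1 : (b * f ^ 2 ^ k + b ^ 2 ^ k * f) ^ 2 ^ s = 0 := by
        have h2 : α * (b * f ^ 2 ^ k + b ^ 2 ^ k * f) ^ 2 ^ s = 0 := by
          linear_combination heq
        rcases mul_eq_zero.mp h2 with h | h
        · exact absurd h hα0
        · exact h
      have h2 : b * f ^ 2 ^ k + b ^ 2 ^ k * f = 0 :=
        (pow_eq_zero_iff (by positivity)).mp h1
      by_cases hf : f = 0
      · exact Or.inl ⟨rfl, hf⟩
      · right
        refine ⟨ha.symm, ?_⟩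
        have ht : (f * b⁻¹) ^ 2 ^ k = f * b⁻¹ := by
          rw [mul_pow, inv_pow]
          field_simp
          linear_combination h2 - (f * b ^ 2 ^ k) * htwo
        rcases hfix _ ht with h | h
        · exact absurd (by
            rcases mul_eq_zero.mp h with h' | h'
            · exact h'
            · exact absurd h' (inv_ne_zero hb)) hf
        · field_simp at h
          exact h
    · -- a ≠ 0
      have hE : e = e * a⁻¹ * a := by field_simp
      have hf2 : f = b * (e * a⁻¹) := by
        field_simp
        linear_combination -hbe
      set t := e * a⁻¹ with hts
      have hmain0 : b * (b * t) ^ 2 ^ k + b ^ 2 ^ k * (b * t) = b ^ 2 ^ k * b * (t ^ 2 ^ k + t) := by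
        rw [mul_pow]; ring
      rw [hE, hf2, hmain0] at heq
      have hmain : a ^ 2 ^ k * a * (t ^ 2 ^ k + t)
          + α * (b ^ 2 ^ k * b) ^ 2 ^ s * (t ^ 2 ^ k + t) ^ 2 ^ s = 0 := by
        rw [mul_pow (b ^ 2 ^ k * b)] at heq
        linear_combination heq
      set u := t ^ 2 ^ k + t with hu_def
      by_cases hu : u = 0
      · have htt : t ^ 2 ^ k = t := by linear_combination hu - t * htwo
        rcases hfix t htt with h | h
        · exact Or.inl ⟨by rw [hE, h, zero_mul], by rw [hf2, h, mul_zero]⟩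
        · exact Or.inr ⟨by rw [hE, h, one_mul], by rw [hf2, h, mul_one]⟩
      · exfalso
        have hb : b ≠ 0 := by
          intro hb0
          rw [hb0] at hmain
          have h0 : a ^ 2 ^ k * a * u = 0 := by
            have hz : ((0 : F) ^ 2 ^ k * 0) ^ 2 ^ s = 0 := by
              rw [mul_zero, zero_pow (by positivity)]
            rw [hz] at hmain
            linear_combination hmain
          rcases mul_eq_zero.mp h0 with h | h
          · rcases mul_eq_zero.mp h with h' | h'
            · exact pow_ne_zero _ ha h'
            · exact ha h'
          · exact hu h
        have e1 : (b ^ (i3 * 2 ^ s)) ^ 3 = (b ^ 2 ^ k * b) ^ 2 ^ s := by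
          rw [← pow_mul, ← pow_succ, ← pow_mul]
          congr 1
          rw [hi3]; ring
        have e2 : (u ^ j3) ^ 3 * u = u ^ 2 ^ s := by
          rw [← pow_mul, ← pow_succ]
          congr 1
          omega
        have e3 : (a ^ i3) ^ 3 = a ^ 2 ^ k * a := by
          rw [← pow_mul, ← pow_succ]
          congr 1
          omega
        have h3 : α * ((b ^ (i3 * 2 ^ s)) ^ 3 * (u ^ j3) ^ 3) * u = (a ^ i3) ^ 3 * u := by
          linear_combination (α * (u ^ j3) ^ 3 * u) * e1 + (α * (b ^ 2 ^ k * b) ^ 2 ^ s) * e2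
            - u * e3 + hmain - (a ^ 2 ^ k * a * u) * htwo
        have h4 : α * ((b ^ (i3 * 2 ^ s)) ^ 3 * (u ^ j3) ^ 3) = (a ^ i3) ^ 3 :=
          mul_right_cancel₀ hu h3
        have hbu : b ^ (i3 * 2 ^ s) * u ^ j3 ≠ 0 :=
          mul_ne_zero (pow_ne_zero _ hb) (pow_ne_zero _ hu)
        refine hαnc (a ^ i3 * (b ^ (i3 * 2 ^ s) * u ^ j3)⁻¹) ?_
        field_simp
        linear_combination h4
  -- now the counting argument
  rcases isEmpty_or_nonempty {p : F × F //
      ((p.1 + a) ^ (2 ^ k + 1) + α * (p.2 + b) ^ ((2 ^ k + 1) * 2 ^ s)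
          + (p.1 ^ (2 ^ k + 1) + α * p.2 ^ ((2 ^ k + 1) * 2 ^ s)),
        (p.1 + a) * (p.2 + b) + p.1 * p.2) = (c, d)} with he | hne
  · left
    exact Nat.card_of_isEmpty
  · right
    obtain ⟨⟨⟨x₀, y₀⟩, hp₀⟩⟩ := hne
    have hp₀' := hp₀
    simp only [Prod.mk.injEq] at hp₀'
    obtain ⟨h01, h02⟩ := hp₀'
    rw [hG x₀ y₀] at h01
    rw [hL x₀ y₀] at h02
    -- the shifted solution
    have hin : b * (y₀ + b) ^ 2 ^ k + b ^ 2 ^ k * (y₀ + b) + b ^ 2 ^ k * b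
        = b * y₀ ^ 2 ^ k + b ^ 2 ^ k * y₀ + b ^ 2 ^ k * b := by
      rw [hfr k y₀ b]
      linear_combination (b ^ 2 ^ k * b) * htwo
    have h11 : a * (x₀ + a) ^ 2 ^ k + a ^ 2 ^ k * (x₀ + a) + a ^ 2 ^ k * a
        + α * (b * (y₀ + b) ^ 2 ^ k + b ^ 2 ^ k * (y₀ + b) + b ^ 2 ^ k * b) ^ 2 ^ s = c := by
      rw [hin, hfr k x₀ a]
      linear_combination h01 + (a ^ 2 ^ k * a) * htwo
    have h12 : b * (x₀ + a) + a * (y₀ + b) + a * b = d := by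
      linear_combination h02 + (a * b) * htwo
    have hp₁ : ((((x₀ + a, y₀ + b) : F × F).1 + a) ^ (2 ^ k + 1)
          + α * (((x₀ + a, y₀ + b) : F × F).2 + b) ^ ((2 ^ k + 1) * 2 ^ s)
          + (((x₀ + a, y₀ + b) : F × F).1 ^ (2 ^ k + 1)
            + α * ((x₀ + a, y₀ + b) : F × F).2 ^ ((2 ^ k + 1) * 2 ^ s)),
        (((x₀ + a, y₀ + b) : F × F).1 + a) * (((x₀ + a, y₀ + b) : F × F).2 + b)
          + ((x₀ + a, y₀ + b) : F × F).1 * ((x₀ + a, y₀ + b) : F × F).2) = (c, d) := by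
      simp only [Prod.mk.injEq]
      constructor
      · rw [hG (x₀ + a) (y₀ + b)]
        exact h11
      · rw [hL (x₀ + a) (y₀ + b)]
        exact h12
    have hdistinct : ((x₀, y₀) : F × F) ≠ (x₀ + a, y₀ + b) := by
      intro h
      rw [Prod.mk.injEq] at h
      apply hab
      rw [Prod.mk.injEq]
      constructor
      · linear_combination -h.1
      · linear_combination -h.2
    rw [Nat.card_eq_two_iff]
    refine ⟨⟨(x₀, y₀), hp₀⟩, ⟨(x₀ + a, y₀ + b), hp₁⟩, ?_, ?_⟩
    · intro hcon
      exact hdistinct (congrArg Subtype.val hcon)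
    · apply Set.eq_univ_of_forall
      rintro ⟨⟨x, y⟩, hp⟩
      have hp' := hp
      simp only [Prod.mk.injEq] at hp'
      obtain ⟨hpc, hpd⟩ := hp'
      rw [hG x y] at hpc
      rw [hL x y] at hpd
      have hbe : b * (x + x₀) = a * (y + y₀) := by
        have h := hpd.trans h02.symm
        linear_combination h + (b * x₀ - a * y) * htwo
      have hmaineq : a * (x + x₀) ^ 2 ^ k + a ^ 2 ^ k * (x + x₀)
          + α * (b * (y + y₀) ^ 2 ^ k + b ^ 2 ^ k * (y + y₀)) ^ 2 ^ s = 0 := by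
        have hgg := hpc.trans h01.symm
        have hsum : (b * (y + y₀) ^ 2 ^ k + b ^ 2 ^ k * (y + y₀)) ^ 2 ^ s
            = (b * y ^ 2 ^ k + b ^ 2 ^ k * y + b ^ 2 ^ k * b) ^ 2 ^ s
              + (b * y₀ ^ 2 ^ k + b ^ 2 ^ k * y₀ + b ^ 2 ^ k * b) ^ 2 ^ s := by
          rw [← hfr s]
          congr 1
          rw [hfr k y y₀]
          linear_combination -(b ^ 2 ^ k * b) * htwo
        rw [hsum, hfr k x x₀]
        linear_combination hgg
          + (a * x₀ ^ 2 ^ k + a ^ 2 ^ k * x₀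
            + α * (b * y₀ ^ 2 ^ k + b ^ 2 ^ k * y₀ + b ^ 2 ^ k * b) ^ 2 ^ s) * htwo
      rcases hcore (x + x₀) (y + y₀) hbe hmaineq with ⟨h1, h2⟩ | ⟨h1, h2⟩
      · have hx : x = x₀ := by linear_combination h1 - x₀ * htwo
        have hy : y = y₀ := by linear_combination h2 - y₀ * htwo
        left
        exact Subtype.ext (show ((x, y) : F × F) = (x₀, y₀) by rw [hx, hy])
      · have hx : x = x₀ + a := by linear_combination h1 - x₀ * htwo
        have hy : y = y₀ + b := by linear_combination h2 - y₀ * htwo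
        right
        simp only [Set.mem_singleton_iff]
        exact Subtype.ext (show ((x, y) : F × F) = (x₀ + a, y₀ + b) by rw [hx, hy])
end

section
/- Let m be even, k coprime to m, s even, and \alpha, \beta non-cubes in F_{2^m}^*. Then the Pott-Zhou functions f_{k,s,\alpha}(x,y) = (x^{2^k+1} + \alpha y^{(2^k+1)2^s}, xy) and f_{k,s,\beta}(x,y) = (x^{2^k+1} + \beta y^{(2^k+1)2^s}, xy) on F_{2^m}^2 are linearly equivalent: there exist F_2-linear bijections L and N of F_{2^m}^2 such that f_{k,s,\alpha}(L(x,y)) = N(f_{k,s,\beta}(x,y)) for all (x,y). -/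
/-- If `d` divides `2^a - 1` and `2^b - 1`, it divides `2^(gcd a b) - 1`. -/
lemma pz_dvd_two_pow_sub_one_gcd {d a b : ℕ} (ha : d ∣ 2 ^ a - 1) (hb : d ∣ 2 ^ b - 1) :
    d ∣ 2 ^ Nat.gcd a b - 1 := by
  have h2 : ∀ n : ℕ, (d ∣ 2 ^ n - 1) ↔ ((2 : ZMod d) ^ n = 1) := by
    intro n
    rw [← Nat.modEq_iff_dvd' Nat.one_le_two_pow]
    constructor
    · intro h
      have := (ZMod.natCast_eq_natCast_iff _ _ _).mpr h.symm
      push_cast at this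
      exact this
    · intro h
      have h' : ((2 ^ n : ℕ) : ZMod d) = ((1 : ℕ) : ZMod d) := by push_cast; exact h
      exact ((ZMod.natCast_eq_natCast_iff _ _ _).mp h').symm
  rw [h2] at ha hb ⊢
  exact orderOf_dvd_iff_pow_eq_one.mp
    (Nat.dvd_gcd (orderOf_dvd_of_pow_eq_one ha) (orderOf_dvd_of_pow_eq_one hb))

/-- The additive equivalence `x ↦ b * x ^ (2^e)` of a finite field of characteristic 2. -/
noncomputable def pzEquiv (F : Type*) [Field F] [Finite F] [CharP F 2]
    (b : F) (hb : b ≠ 0) (e : ℕ) : F ≃+ F := by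
  haveI : Fact (Nat.Prime 2) := ⟨Nat.prime_two⟩
  refine AddEquiv.ofBijective
    (AddMonoidHom.mk' (fun x => b * x ^ 2 ^ e) (fun x y => by
      show b * (x + y) ^ 2 ^ e = b * x ^ 2 ^ e + b * y ^ 2 ^ e
      rw [add_pow_char_pow, mul_add])) ?_
  rw [← Finite.injective_iff_bijective]
  intro x y hxy
  simp only [AddMonoidHom.mk'_apply] at hxy
  have h1 : x ^ 2 ^ e = y ^ 2 ^ e := mul_left_cancel₀ hb hxy
  have h2 : (x - y) ^ 2 ^ e = 0 := by rw [sub_pow_char_pow, h1, sub_self]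
  have := pow_eq_zero_iff (pow_ne_zero e (two_ne_zero)) |>.mp h2
  exact sub_eq_zero.mp this

lemma pzEquiv_apply (F : Type*) [Field F] [Finite F] [CharP F 2]
    (b : F) (hb : b ≠ 0) (e : ℕ) (x : F) : pzEquiv F b hb e x = b * x ^ 2 ^ e := rfl

theorem pott_zhou_noncube_linear_equiv (F : Type*) [Field F] [Fintype F] (m k s : ℕ)
    (hm0 : 0 < m) (hme : Even m) (hk : 0 < k) (hcop : Nat.gcd k m = 1)
    (hse : Even s) (hcard : Fintype.card F = 2 ^ m)
    (α β : F) (hα0 : α ≠ 0) (hαnc : ∀ w : F, α ≠ w ^ 3)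
    (hβ0 : β ≠ 0) (hβnc : ∀ w : F, β ≠ w ^ 3) :
    ∃ L N : (F × F) ≃+ (F × F), ∀ x y : F,
      ((L (x, y)).1 ^ (2 ^ k + 1) + α * (L (x, y)).2 ^ ((2 ^ k + 1) * 2 ^ s),
        (L (x, y)).1 * (L (x, y)).2) =
      N (x ^ (2 ^ k + 1) + β * y ^ ((2 ^ k + 1) * 2 ^ s), x * y) := by
  -- characteristic 2
  obtain ⟨p, hp⟩ := CharP.exists F
  haveI := hp
  obtain ⟨np, hpprime, hcardp⟩ := FiniteField.card F p
  have hp2 : p = 2 := by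
    have hdvd : p ∣ 2 ^ m := by
      rw [← hcard, hcardp]; exact dvd_pow_self p (by exact_mod_cast np.ne_zero)
    have := (Nat.Prime.dvd_of_dvd_pow hpprime hdvd)
    exact ((Nat.prime_dvd_prime_iff_eq hpprime Nat.prime_two).mp this)
  subst hp2
  haveI : CharP F 2 := hp
  haveI : Fact (Nat.Prime 2) := ⟨Nat.prime_two⟩
  -- notation
  set n : ℕ := (2 ^ k + 1) * 2 ^ s with hn
  set Nc : ℕ := 2 ^ m - 1 with hNc
  have h2m1 : 1 ≤ 2 ^ m := Nat.one_le_two_pow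
  have hcardU : Nat.card Fˣ = Nc := by rw [Nat.card_units, Nat.card_eq_fintype_card, hcard]
  -- gcd (2k) m = 2
  have hkodd : ¬ (2 ∣ k) := by
    intro h2k
    have h2m : 2 ∣ m := hme.two_dvd
    have := Nat.dvd_gcd h2k h2m
    rw [hcop] at this; omega
  have hgcd2 : Nat.gcd (2 * k) m = 2 := by
    have h2d : 2 ∣ Nat.gcd (2 * k) m := Nat.dvd_gcd ⟨k, rfl⟩ hme.two_dvd
    have hco : Nat.Coprime (Nat.gcd (2 * k) m) k :=
      Nat.Coprime.coprime_dvd_left (Nat.gcd_dvd_right _ _)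
        (Nat.coprime_comm.mp hcop)
    have hd2 : Nat.gcd (2 * k) m ∣ 2 :=
      (Nat.Coprime.dvd_of_dvd_mul_right hco) (Nat.gcd_dvd_left _ _)
    exact Nat.dvd_antisymm hd2 h2d
  -- d ∣ 3 where d = gcd n Nc
  set d : ℕ := Nat.gcd n Nc with hd
  have hNodd : ¬ (2 ∣ Nc) := by
    intro h
    have h1 : (2:ℕ) ∣ 2 ^ m := dvd_pow_self 2 hm0.ne'
    have := Nat.dvd_sub h1 h
    rw [hNc, Nat.sub_sub_self h2m1] at this
    omega
  have hdodd : ¬ (2 ∣ d) := fun h => hNodd (h.trans (Nat.gcd_dvd_right _ _))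
  have hdn1 : d ∣ 2 ^ k + 1 := by
    have hcod : Nat.Coprime d (2 ^ s) :=
      Nat.Coprime.pow_right _
        (Nat.coprime_comm.mp ((Nat.Prime.coprime_iff_not_dvd Nat.prime_two).mpr hdodd))
    exact hcod.dvd_of_dvd_mul_right (Nat.gcd_dvd_left _ _)
  have hdvd2k : (2 ^ k + 1) ∣ 2 ^ (2 * k) - 1 := by
    refine ⟨2 ^ k - 1, ?_⟩
    have h1 : 1 ≤ 2 ^ k := Nat.one_le_two_pow
    have h2 : 1 ≤ 2 ^ k * 2 ^ k := Nat.mul_pos h1 h1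
    rw [two_mul, pow_add]
    zify [h1, h2]
    ring
  have hd3 : d ∣ 3 := by
    have hA : d ∣ 2 ^ (2 * k) - 1 := (hdn1.trans hdvd2k)
    have hB : d ∣ 2 ^ m - 1 := Nat.gcd_dvd_right _ _
    have := pz_dvd_two_pow_sub_one_gcd hA hB
    rwa [hgcd2] at this
  -- Bezout: ∃ u v : ℤ, n * u + Nc * v = 3
  obtain ⟨t, ht⟩ := hd3
  have hbez : ∃ u v : ℤ, (n : ℤ) * u + (Nc : ℤ) * v = 3 := by
    refine ⟨Nat.gcdA n Nc * t, Nat.gcdB n Nc * t, ?_⟩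
    have hab := Nat.gcd_eq_gcd_ab n Nc
    have ht' : (3 : ℤ) = (d : ℤ) * t := by exact_mod_cast ht
    rw [← hd] at hab
    calc (n : ℤ) * (Nat.gcdA n Nc * t) + (Nc : ℤ) * (Nat.gcdB n Nc * t)
        = ((n : ℤ) * Nat.gcdA n Nc + (Nc : ℤ) * Nat.gcdB n Nc) * t := by ring
      _ = (d : ℤ) * t := by rw [← hab]
      _ = 3 := ht'.symm
  obtain ⟨u, v, huv⟩ := hbez
  -- cyclic group generator
  obtain ⟨g, hg⟩ := IsCyclic.exists_generator (α := Fˣ)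
  have hmem : ∀ x : Fˣ, ∃ i : ℤ, g ^ i = x := fun x => by
    have := hg x
    rwa [Subgroup.mem_zpowers_iff] at this
  obtain ⟨i, hi⟩ := hmem (Units.mk0 α hα0)
  obtain ⟨j, hj⟩ := hmem (Units.mk0 β hβ0)
  have keyA : ∀ (γ : F) (hγ0 : γ ≠ 0), (∀ w : F, γ ≠ w ^ 3) →
      ∀ i : ℤ, g ^ i = Units.mk0 γ hγ0 → ¬ ((3:ℤ) ∣ i) := by
    rintro γ hγ0 hγnc i hgi ⟨t, rfl⟩
    apply hγnc ((g ^ t : Fˣ) : F)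
    have h2 : ((g ^ t) ^ (3 : ℕ) : Fˣ) = Units.mk0 γ hγ0 := by
      rw [← hgi, ← zpow_natCast (g ^ t) 3, ← zpow_mul]
      congr 1
      push_cast; ring
    calc γ = ((Units.mk0 γ hγ0 : Fˣ) : F) := rfl
      _ = (((g ^ t) ^ (3 : ℕ) : Fˣ) : F) := by rw [h2]
      _ = ((g ^ t : Fˣ) : F) ^ 3 := Units.val_pow_eq_pow_val _ _
  have hi3 : ¬ ((3:ℤ) ∣ i) := keyA α hα0 hαnc i hi
  have hj3 : ¬ ((3:ℤ) ∣ j) := keyA β hβ0 hβnc j hj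
  -- Obtain e and wu with β ^ 2^e = α * wu^3
  have hkey : ∃ (e : ℕ) (wu : Fˣ), β ^ 2 ^ e = α * ((wu : F)) ^ 3 := by
    have hcases : ((3:ℤ) ∣ j - i) ∨ ((3:ℤ) ∣ 2 * j - i) := by
      have h1 : i % 3 = 1 ∨ i % 3 = 2 := by omega
      have h2 : j % 3 = 1 ∨ j % 3 = 2 := by omega
      rcases h1 with h1 | h1 <;> rcases h2 with h2 | h2
      · left; omega
      · right; omega
      · right; omega
      · left; omega
    rcases hcases with ⟨t, ht⟩ | ⟨t, ht⟩
    · refine ⟨0, g ^ t, ?_⟩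
      have hU : (Units.mk0 β hβ0) = (Units.mk0 α hα0) * (g ^ t) ^ (3:ℕ) := by
        rw [← hi, ← hj, ← zpow_natCast, ← zpow_mul]
        rw [← zpow_add]
        congr 1
        omega
      have := congrArg (Units.val) hU
      simpa [Units.val_pow_eq_pow_val] using this
    · refine ⟨1, g ^ t, ?_⟩
      have hU : (Units.mk0 β hβ0) ^ (2:ℕ) = (Units.mk0 α hα0) * (g ^ t) ^ (3:ℕ) := by
        rw [← hi, ← hj, ← zpow_natCast, ← zpow_natCast (g ^ t), ← zpow_mul, ← zpow_mul]
        rw [← zpow_add]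
        congr 1
        omega
      have := congrArg (Units.val) hU
      simpa [Units.val_pow_eq_pow_val] using this
  obtain ⟨e, wu, hw⟩ := hkey
  -- Solve bu ^ n = wu ^ 3
  have hNone : wu ^ (Nc : ℤ) = 1 := by
    rw [zpow_natCast, ← hcardU, pow_card_eq_one']
  have hbu : (wu ^ u) ^ (n : ℕ) = wu ^ (3 : ℤ) := by
    have key : wu ^ ((n:ℤ) * u + (Nc:ℤ) * v) = (wu ^ u) ^ (n : ℕ) * (wu ^ v) ^ (Nc : ℕ) := by
      rw [zpow_add, mul_comm ((n:ℤ)) u, mul_comm ((Nc:ℤ)) v, zpow_mul, zpow_mul,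
        zpow_natCast, zpow_natCast]
    rw [huv] at key
    rw [← hcardU, pow_card_eq_one', mul_one] at key
    exact key.symm
  set bu : Fˣ := wu ^ u with hbudef
  have hbF : ((bu : F)) ^ n = ((wu : F)) ^ 3 := by
    have := congrArg (Units.val) hbu
    rw [Units.val_pow_eq_pow_val] at this
    rw [this]
    rw [show (3:ℤ) = ((3:ℕ):ℤ) by norm_num, zpow_natCast, Units.val_pow_eq_pow_val]
  have hb0 : (bu : F) ≠ 0 := Units.ne_zero bu
  have hcond : α * ((bu : F)) ^ n = β ^ 2 ^ e := by rw [hbF, ← hw]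
  -- build the equivalences
  refine ⟨AddEquiv.prodCongr (pzEquiv F 1 one_ne_zero e) (pzEquiv F (bu : F) hb0 e),
    AddEquiv.prodCongr (pzEquiv F 1 one_ne_zero e) (pzEquiv F (bu : F) hb0 e), ?_⟩
  have happ : ∀ (c : F) (hc : c ≠ 0) (cd : F) (hcd : cd ≠ 0) (z w : F),
      (AddEquiv.prodCongr (pzEquiv F c hc e) (pzEquiv F cd hcd e)) (z, w)
        = (c * z ^ 2 ^ e, cd * w ^ 2 ^ e) := fun _ _ _ _ _ _ => rfl
  intro x y
  rw [happ, happ]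
  simp only [one_mul, Prod.mk.injEq]
  constructor
  · -- first coordinate
    have hx : (x ^ 2 ^ e) ^ (2 ^ k + 1) = (x ^ (2 ^ k + 1)) ^ 2 ^ e := by
      rw [← pow_mul, ← pow_mul, mul_comm]
    have hy : (y ^ 2 ^ e) ^ n = (y ^ n) ^ 2 ^ e := by
      rw [← pow_mul, ← pow_mul, mul_comm]
    rw [add_pow_char_pow (p := 2), mul_pow β, ← hcond, mul_pow, hx, hy]
    ring
  · -- second coordinate
    rw [mul_pow]
    ring
end

section
/- Let m be even, k coprime to m with 0 < k < m, s even, and \alpha a non-cube in F_{2^m}^*. The functions f_{k,s,\alpha}(x,y) = (x^{2^k+1} + \alpha y^{(2^k+1)2^s}, xy) and f_{m-k,s,\alpha}(x,y) = (x^{2^{m-k}+1} + \alpha y^{(2^{m-k}+1)2^s}, xy) on F_{2^m}^2 are linearly equivalent, via L(x,y) = (x^{2^{m-k}}, y^{2^{m-k}}) and N(x,y) = (x, y^{2^{m-k}}). -/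
theorem pott_zhou_k_neg_k_linear_equiv (F : Type*) [Field F] [Fintype F] (m k s : ℕ)
    (hm0 : 0 < m) (hme : Even m) (hk : 0 < k) (hkm : k < m)
    (hcop : Nat.gcd k m = 1) (hse : Even s) (hcard : Fintype.card F = 2 ^ m)
    (α : F) (hα0 : α ≠ 0) (hαnc : ∀ w : F, α ≠ w ^ 3) :
    (Function.Bijective (fun p : F × F => (p.1 ^ 2 ^ (m - k), p.2 ^ 2 ^ (m - k)))) ∧
    (Function.Bijective (fun p : F × F => (p.1, p.2 ^ 2 ^ (m - k)))) ∧
    (∀ p q : F × F,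
      (((p + q).1 ^ 2 ^ (m - k), (p + q).2 ^ 2 ^ (m - k)) : F × F) =
        (p.1 ^ 2 ^ (m - k), p.2 ^ 2 ^ (m - k)) + (q.1 ^ 2 ^ (m - k), q.2 ^ 2 ^ (m - k))) ∧
    (∀ p q : F × F,
      (((p + q).1, (p + q).2 ^ 2 ^ (m - k)) : F × F) =
        (p.1, p.2 ^ 2 ^ (m - k)) + (q.1, q.2 ^ 2 ^ (m - k))) ∧
    ∀ x y : F,
      ((x ^ 2 ^ (m - k)) ^ (2 ^ k + 1) + α * (y ^ 2 ^ (m - k)) ^ ((2 ^ k + 1) * 2 ^ s),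
        (x ^ 2 ^ (m - k)) * (y ^ 2 ^ (m - k))) =
      ((x ^ (2 ^ (m - k) + 1) + α * y ^ ((2 ^ (m - k) + 1) * 2 ^ s)),
        (x * y) ^ 2 ^ (m - k)) := by
  -- characteristic 2
  obtain ⟨p, hp⟩ := CharP.exists F
  haveI := hp
  obtain ⟨n, hpp, hcard'⟩ := FiniteField.card F p
  have hp2 : p = 2 := by
    have hdvd : p ∣ 2 ^ m := by
      rw [← hcard, hcard']
      exact dvd_pow_self p n.pos.ne'
    exact (Nat.prime_dvd_prime_iff_eq hpp Nat.prime_two).mp (hpp.dvd_of_dvd_pow hdvd)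
  subst hp2
  haveI : Fact (Nat.Prime 2) := ⟨Nat.prime_two⟩
  -- Frobenius powers are injective
  have hinj : Function.Injective (fun x : F => x ^ 2 ^ (m - k)) := by
    have : (fun x : F => x ^ 2 ^ (m - k)) = (iterateFrobenius F 2 (m - k)) := by
      funext x
      rw [iterateFrobenius_def]
    rw [this]
    exact (iterateFrobenius F 2 (m - k)).injective
  -- x ^ (2 ^ m) = x
  have hpow : ∀ x : F, x ^ 2 ^ m = x := fun x => by
    rw [← hcard]; exact FiniteField.pow_card x
  have hmk : m - k + k = m := Nat.sub_add_cancel hkm.le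
  -- additivity in char 2
  have hadd : ∀ a b : F, (a + b) ^ 2 ^ (m - k) = a ^ 2 ^ (m - k) + b ^ 2 ^ (m - k) :=
    fun a b => add_pow_char_pow a b 2 (m - k)
  have key : ∀ (z : F) (t : ℕ), (z ^ 2 ^ (m - k)) ^ ((2 ^ k + 1) * t) = z ^ ((2 ^ (m - k) + 1) * t) := by
    intro z t
    rw [← pow_mul]
    have h2 : 2 ^ (m - k) * 2 ^ k = 2 ^ m := by rw [← pow_add, hmk]
    have h1 : 2 ^ (m - k) * ((2 ^ k + 1) * t) = 2 ^ m * t + 2 ^ (m - k) * t := by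
      rw [← h2]; ring
    rw [h1, pow_add, pow_mul, hpow, ← pow_add]
    congr 1
    ring
  refine ⟨?_, ?_, ?_, ?_, ?_⟩
  · rw [← Finite.injective_iff_bijective]
    intro a b h
    have h1 := congrArg Prod.fst h
    have h2 := congrArg Prod.snd h
    simp only at h1 h2
    exact Prod.ext (hinj h1) (hinj h2)
  · rw [← Finite.injective_iff_bijective]
    intro a b h
    have h1 := congrArg Prod.fst h
    have h2 := congrArg Prod.snd h
    simp only at h1 h2
    exact Prod.ext h1 (hinj h2)
  · intro p q
    simp [Prod.ext_iff, hadd]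
  · intro p q
    simp [Prod.ext_iff, hadd]
  · intro x y
    refine Prod.ext ?_ (by simp [mul_pow])
    simp only
    have e1 := key x 1
    rw [mul_one, mul_one] at e1
    rw [e1, key y (2 ^ s)]
end

section
/- Let a_1, a_3 be nonzero elements of F_{2^4} with a_1/a_3 a non-cube, and let L(x) = a_1 x^2 + a_3 x^8 and N(x) = a_3^2 a_1 x + a_1^3 x^2 + a_1^2 a_3 x^4 + a_3^3 x^8. Then L(x)^3 = N(x^3) holds for all x in F_{2^4}. -/
theorem L_cubed_eq_N_of_cube (F : Type*) [Field F] [Fintype F]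
    (hcard : Fintype.card F = 16)
    (a1 a3 : F) (h1 : a1 ≠ 0) (h3 : a3 ≠ 0)
    (hnc : ∀ w : F, a1 / a3 ≠ w ^ 3) :
    ∀ x : F, (a1 * x ^ 2 + a3 * x ^ 8) ^ 3 =
      a3 ^ 2 * a1 * (x ^ 3) + a1 ^ 3 * (x ^ 3) ^ 2 + a1 ^ 2 * a3 * (x ^ 3) ^ 4
        + a3 ^ 3 * (x ^ 3) ^ 8 := by
  have hc : ((16 : ℕ) : F) = 0 := by
    rw [← hcard]; exact FiniteField.cast_card_eq_zero F
  have h2 : (2 : F) = 0 := by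
    have h16 : (2 : F) ^ 4 = 0 := by norm_num at hc ⊢; linear_combination hc
    exact pow_eq_zero_iff (by norm_num) |>.mp h16
  intro x
  have h16 : x ^ 16 = x := by rw [← hcard]; exact FiniteField.pow_card x
  linear_combination (a1 * a3 ^ 2 * x ^ 2) * h16 +
    (a1 ^ 2 * a3 * x ^ 12 + a1 * a3 ^ 2 * x ^ 18) * h2
end
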